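/- arXiv:1903.02406 — 2 statements merged into one kernel-verified Lean document; each statement's English description precedes it below -/
import Mathlib

section
/- The content placement game for layered coding is an exact potential game: for any cache m, any placement strategies B^(m), B̄^(m) of cache m, and any fixed strategies B^(-m) of the other caches, the change in cache m's local residual bandwidth equals the change in the global residual bandwidth, i.e., f_LC^(m)(B̄^(m),B^(-m)) - f_LC^(m)(B^(m),B^(-m)) = f_LC(B̄^(m),B^(-m)) - f_LC(B^(m),B^(-m)). -/
open Finset

/-- The LC content placement game is an exact potential game: the change in cache `m`'s
local residual bandwidth equals the change in the global residual bandwidth, for any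
unilateral change of cache `m`'s placement. -/
theorem lc_exact_potential
    (N J Q R : ℕ) (Θ : Finset (Finset ℕ))
    (hΘ : ∀ s ∈ Θ, s.Nonempty ∧ s ⊆ Finset.Icc 1 N)
    (p : Finset ℕ → ℝ) (hp : ∀ s ∈ Θ, 0 ≤ p s)
    (a : ℕ → ℕ → Finset ℕ → ℝ) (ha : ∀ j ρ s, 0 ≤ a j ρ s)
    (w : ℕ → ℕ → ℝ) (hw : ∀ j q, 0 ≤ w j q)
    (m : ℕ) (hm : m ∈ Finset.Icc 1 N)
    (B B' : ℕ → ℕ → ℕ → ℝ)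
    (hB : ∀ ℓ j q, B ℓ j q = 0 ∨ B ℓ j q = 1)
    (hB' : ∀ ℓ j q, B' ℓ j q = 0 ∨ B' ℓ j q = 1)
    (hagree : ∀ ℓ, ℓ ≠ m → B' ℓ = B ℓ) :
    (∑ s ∈ Θ.filter (fun s => m ∈ s), ∑ j ∈ Finset.Icc 1 J, ∑ ρ ∈ Finset.Icc 1 R,
        ∑ q ∈ Finset.Icc 1 ρ, p s * a j ρ s * w j q * (1 - B' m j q) *
          ∏ ℓ ∈ s.erase m, (1 - B' ℓ j q))
    - (∑ s ∈ Θ.filter (fun s => m ∈ s), ∑ j ∈ Finset.Icc 1 J, ∑ ρ ∈ Finset.Icc 1 R,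
        ∑ q ∈ Finset.Icc 1 ρ, p s * a j ρ s * w j q * (1 - B m j q) *
          ∏ ℓ ∈ s.erase m, (1 - B ℓ j q))
    = (∑ s ∈ Θ, ∑ j ∈ Finset.Icc 1 J, ∑ ρ ∈ Finset.Icc 1 R,
        p s * a j ρ s * ∑ q ∈ Finset.Icc 1 ρ, w j q * ∏ ℓ ∈ s, (1 - B' ℓ j q))
    - (∑ s ∈ Θ, ∑ j ∈ Finset.Icc 1 J, ∑ ρ ∈ Finset.Icc 1 R,
        p s * a j ρ s * ∑ q ∈ Finset.Icc 1 ρ, w j q * ∏ ℓ ∈ s, (1 - B ℓ j q)) := by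
  classical
  have herase : ∀ (s : Finset ℕ) j q, (∏ ℓ ∈ s.erase m, (1 - B' ℓ j q))
      = ∏ ℓ ∈ s.erase m, (1 - B ℓ j q) := fun s j q =>
    Finset.prod_congr rfl fun ℓ hℓ => by rw [hagree ℓ (Finset.ne_of_mem_erase hℓ)]
  rw [← Finset.sum_sub_distrib, ← Finset.sum_sub_distrib]
  have hfilter : (∑ s ∈ Θ, ((∑ j ∈ Finset.Icc 1 J, ∑ ρ ∈ Finset.Icc 1 R,
        p s * a j ρ s * ∑ q ∈ Finset.Icc 1 ρ, w j q * ∏ ℓ ∈ s, (1 - B' ℓ j q))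
      - ∑ j ∈ Finset.Icc 1 J, ∑ ρ ∈ Finset.Icc 1 R,
        p s * a j ρ s * ∑ q ∈ Finset.Icc 1 ρ, w j q * ∏ ℓ ∈ s, (1 - B ℓ j q)))
    = ∑ s ∈ Θ.filter (fun s => m ∈ s), ((∑ j ∈ Finset.Icc 1 J, ∑ ρ ∈ Finset.Icc 1 R,
        p s * a j ρ s * ∑ q ∈ Finset.Icc 1 ρ, w j q * ∏ ℓ ∈ s, (1 - B' ℓ j q))
      - ∑ j ∈ Finset.Icc 1 J, ∑ ρ ∈ Finset.Icc 1 R,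
        p s * a j ρ s * ∑ q ∈ Finset.Icc 1 ρ, w j q * ∏ ℓ ∈ s, (1 - B ℓ j q)) := by
    rw [eq_comm]
    refine Finset.sum_filter_of_ne fun s hs hne => ?_
    by_contra hms
    apply hne
    rw [sub_eq_zero]
    refine Finset.sum_congr rfl fun j _ => Finset.sum_congr rfl fun ρ _ => ?_
    congr 1
    refine Finset.sum_congr rfl fun q _ => ?_
    congr 1
    exact Finset.prod_congr rfl fun ℓ hℓ => by
      rw [hagree ℓ (fun h => hms (h ▸ hℓ))]
  rw [hfilter]
  refine Finset.sum_congr rfl fun s hs => ?_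
  have hms : m ∈ s := (Finset.mem_filter.mp hs).2
  simp only [← Finset.sum_sub_distrib, Finset.mul_sum]
  refine Finset.sum_congr rfl fun j _ => Finset.sum_congr rfl fun ρ _ =>
    Finset.sum_congr rfl fun q _ => ?_
  rw [← Finset.mul_prod_erase s _ hms, ← Finset.mul_prod_erase s _ hms, herase]
  ring
end

section
/- The content placement game for multiple description coding is an exact potential game: for any cache m, any two placement strategies B^(m), B̄^(m) of cache m, and fixed strategies B^(-m) of the other caches, f_MDC^(m)(B̄^(m),B^(-m)) - f_MDC^(m)(B^(m),B^(-m)) = f_MDC(B̄^(m),B^(-m)) - f_MDC(B^(m),B^(-m)). -/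
open Finset

/-- The MDC content placement game is an exact potential game: the change in cache `m`'s
local residual bandwidth equals the change in the global residual bandwidth, for any
unilateral change of cache `m`'s placement. -/
theorem mdc_exact_potential
    (N J Q R : ℕ) (Θ : Finset (Finset ℕ))
    (hΘ : ∀ s ∈ Θ, s.Nonempty ∧ s ⊆ Finset.Icc 1 N)
    (p : Finset ℕ → ℝ) (hp : ∀ s ∈ Θ, 0 ≤ p s)
    (a : ℕ → ℕ → Finset ℕ → ℝ) (ha : ∀ j ρ s, 0 ≤ a j ρ s)
    (w : ℕ → ℝ) (hw : ∀ j, 0 ≤ w j)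
    (D : ℕ → ℕ) (hD : ∀ ρ, D ρ ≤ Q)
    (m : ℕ) (hm : m ∈ Finset.Icc 1 N)
    (B B' : ℕ → ℕ → ℕ → ℝ)
    (hB : ∀ ℓ j q, B ℓ j q = 0 ∨ B ℓ j q = 1)
    (hB' : ∀ ℓ j q, B' ℓ j q = 0 ∨ B' ℓ j q = 1)
    (hagree : ∀ ℓ, ℓ ≠ m → B' ℓ = B ℓ) :
    ((1 / (Q : ℝ)) * ∑ s ∈ Θ.filter (fun s => m ∈ s), ∑ j ∈ Finset.Icc 1 J,
        ∑ ρ ∈ Finset.Icc 1 R, p s * a j ρ s * w j *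
          max 0 ((D ρ : ℝ) - (Q : ℝ) +
            ∑ q ∈ Finset.Icc 1 Q, (1 - B' m j q) * ∏ ℓ ∈ s.erase m, (1 - B' ℓ j q)))
    - ((1 / (Q : ℝ)) * ∑ s ∈ Θ.filter (fun s => m ∈ s), ∑ j ∈ Finset.Icc 1 J,
        ∑ ρ ∈ Finset.Icc 1 R, p s * a j ρ s * w j *
          max 0 ((D ρ : ℝ) - (Q : ℝ) +
            ∑ q ∈ Finset.Icc 1 Q, (1 - B m j q) * ∏ ℓ ∈ s.erase m, (1 - B ℓ j q)))
    = ((1 / (Q : ℝ)) * ∑ s ∈ Θ, ∑ j ∈ Finset.Icc 1 J, ∑ ρ ∈ Finset.Icc 1 R,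
        p s * a j ρ s * w j *
          max 0 ((D ρ : ℝ) - (Q : ℝ) + ∑ q ∈ Finset.Icc 1 Q, ∏ ℓ ∈ s, (1 - B' ℓ j q)))
    - ((1 / (Q : ℝ)) * ∑ s ∈ Θ, ∑ j ∈ Finset.Icc 1 J, ∑ ρ ∈ Finset.Icc 1 R,
        p s * a j ρ s * w j *
          max 0 ((D ρ : ℝ) - (Q : ℝ) + ∑ q ∈ Finset.Icc 1 Q, ∏ ℓ ∈ s, (1 - B ℓ j q))) := by
  -- Rewrite the full products over `s ∋ m` as `(1 - B m) * ∏ over erase m`.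
  have hprod : ∀ (C : ℕ → ℕ → ℕ → ℝ) (s : Finset ℕ) (j q : ℕ), m ∈ s →
      ∏ ℓ ∈ s, (1 - C ℓ j q) = (1 - C m j q) * ∏ ℓ ∈ s.erase m, (1 - C ℓ j q) :=
    fun C s j q hms => (Finset.mul_prod_erase s _ hms).symm
  -- Split global sums into `m ∈ s` and `m ∉ s` parts.
  have hsplit : ∀ (C : ℕ → ℕ → ℕ → ℝ),
      (∑ s ∈ Θ, ∑ j ∈ Finset.Icc 1 J, ∑ ρ ∈ Finset.Icc 1 R,
        p s * a j ρ s * w j *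
          max 0 ((D ρ : ℝ) - (Q : ℝ) + ∑ q ∈ Finset.Icc 1 Q, ∏ ℓ ∈ s, (1 - C ℓ j q)))
      = (∑ s ∈ Θ.filter (fun s => m ∈ s), ∑ j ∈ Finset.Icc 1 J, ∑ ρ ∈ Finset.Icc 1 R,
        p s * a j ρ s * w j *
          max 0 ((D ρ : ℝ) - (Q : ℝ) + ∑ q ∈ Finset.Icc 1 Q, ∏ ℓ ∈ s, (1 - C ℓ j q)))
      + (∑ s ∈ Θ.filter (fun s => m ∉ s), ∑ j ∈ Finset.Icc 1 J, ∑ ρ ∈ Finset.Icc 1 R,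
        p s * a j ρ s * w j *
          max 0 ((D ρ : ℝ) - (Q : ℝ) + ∑ q ∈ Finset.Icc 1 Q, ∏ ℓ ∈ s, (1 - C ℓ j q))) := by
    intro C
    exact (Finset.sum_filter_add_sum_filter_not Θ (fun s => m ∈ s) _).symm
  rw [hsplit B, hsplit B']
  -- The `m ∉ s` parts are identical for B and B'.
  have hsame : (∑ s ∈ Θ.filter (fun s => m ∉ s), ∑ j ∈ Finset.Icc 1 J, ∑ ρ ∈ Finset.Icc 1 R,
        p s * a j ρ s * w j *
          max 0 ((D ρ : ℝ) - (Q : ℝ) + ∑ q ∈ Finset.Icc 1 Q, ∏ ℓ ∈ s, (1 - B' ℓ j q)))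
      = (∑ s ∈ Θ.filter (fun s => m ∉ s), ∑ j ∈ Finset.Icc 1 J, ∑ ρ ∈ Finset.Icc 1 R,
        p s * a j ρ s * w j *
          max 0 ((D ρ : ℝ) - (Q : ℝ) + ∑ q ∈ Finset.Icc 1 Q, ∏ ℓ ∈ s, (1 - B ℓ j q))) := by
    refine Finset.sum_congr rfl fun s hs => ?_
    have hms : m ∉ s := (Finset.mem_filter.mp hs).2
    refine Finset.sum_congr rfl fun j _ => Finset.sum_congr rfl fun ρ _ => ?_
    have : (∑ q ∈ Finset.Icc 1 Q, ∏ ℓ ∈ s, (1 - B' ℓ j q))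
        = ∑ q ∈ Finset.Icc 1 Q, ∏ ℓ ∈ s, (1 - B ℓ j q) := by
      refine Finset.sum_congr rfl fun q _ => Finset.prod_congr rfl fun ℓ hℓ => ?_
      rw [hagree ℓ (fun h => hms (h ▸ hℓ))]
    rw [this]
  -- The `m ∈ s` parts match the local sums.
  have hloc : ∀ (C : ℕ → ℕ → ℕ → ℝ),
      (∑ s ∈ Θ.filter (fun s => m ∈ s), ∑ j ∈ Finset.Icc 1 J, ∑ ρ ∈ Finset.Icc 1 R,
        p s * a j ρ s * w j *
          max 0 ((D ρ : ℝ) - (Q : ℝ) +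
            ∑ q ∈ Finset.Icc 1 Q, (1 - C m j q) * ∏ ℓ ∈ s.erase m, (1 - C ℓ j q)))
      = (∑ s ∈ Θ.filter (fun s => m ∈ s), ∑ j ∈ Finset.Icc 1 J, ∑ ρ ∈ Finset.Icc 1 R,
        p s * a j ρ s * w j *
          max 0 ((D ρ : ℝ) - (Q : ℝ) + ∑ q ∈ Finset.Icc 1 Q, ∏ ℓ ∈ s, (1 - C ℓ j q))) := by
    intro C
    refine Finset.sum_congr rfl fun s hs => ?_
    have hms : m ∈ s := (Finset.mem_filter.mp hs).2
    refine Finset.sum_congr rfl fun j _ => Finset.sum_congr rfl fun ρ _ => ?_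
    have : (∑ q ∈ Finset.Icc 1 Q, (1 - C m j q) * ∏ ℓ ∈ s.erase m, (1 - C ℓ j q))
        = ∑ q ∈ Finset.Icc 1 Q, ∏ ℓ ∈ s, (1 - C ℓ j q) :=
      Finset.sum_congr rfl fun q _ => (hprod C s j q hms).symm
    rw [this]
  rw [hsame, hloc B, hloc B']
  ring
end
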